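/- arXiv:2311.12625 — 2 statements merged into one kernel-verified Lean document; each statement's English description precedes it below -/
import Mathlib

section
/- Adjointness of inclusion and restriction: for all f ∈ R_m and all g ∈ R_{m+1}, ⟨i(f), g⟩_{m+1} = ⟨f, r(g)⟩_m, where i: R_m → R_{m+1} is the natural inclusion and r: R_{m+1} → R_m is the restriction r(g) = g(x_1,…,x_m,0,x_{m+2},x_{m+3},…) followed by relabelling the variables (x_{m+2},x_{m+3},…) as (x_{m+1},x_{m+2},…). -/
open scoped BigOperators Classical

noncomputable section

/-- The field `K = ℚ(q,t)` of rational functions in two indeterminates. -/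
abbrev KK : Type := FractionRing (MvPolynomial (Fin 2) ℚ)

/-- The indeterminate `q`. -/
def qq : KK := algebraMap (MvPolynomial (Fin 2) ℚ) KK (MvPolynomial.X 0)

/-- The indeterminate `t`. -/
def tq : KK := algebraMap (MvPolynomial (Fin 2) ℚ) KK (MvPolynomial.X 1)

/-- Polynomials in `N` variables over `K`. -/
abbrev Pol (N : ℕ) : Type := MvPolynomial (Fin N) KK

namespace MSym

/-! ## Permutations, reduced words, Bruhat order -/

/-- The adjacent transposition `s_{i+1} = (i, i+1)` (0-indexed), junk `1` if out of range. -/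
def adj (n i : ℕ) : Equiv.Perm (Fin n) :=
  if h : i + 1 < n then Equiv.swap ⟨i, Nat.lt_of_succ_lt h⟩ ⟨i + 1, h⟩ else 1

/-- Number of inversions of a permutation (its Coxeter length). -/
def invCount {n : ℕ} (w : Equiv.Perm (Fin n)) : ℕ :=
  ((Finset.univ : Finset (Fin n × Fin n)).filter fun p => p.1 < p.2 ∧ w p.2 < w p.1).card

/-- `l` is a reduced word for `w` (letters are 0-indexed adjacent transpositions). -/
def ReducedWord {n : ℕ} (w : Equiv.Perm (Fin n)) (l : List ℕ) : Prop :=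
  (∀ i ∈ l, i + 1 < n) ∧ (l.map (adj n)).prod = w ∧ l.length = invCount w

/-- Strict Bruhat order on permutations: `u` is a proper subword of `v`. -/
def BruhatLT {n : ℕ} (u v : Equiv.Perm (Fin n)) : Prop :=
  ∃ lv lu, ReducedWord v lv ∧ ReducedWord u lu ∧ lu.Sublist lv ∧ lu.length < lv.length

/-! ## Compositions, the Bruhat order on compositions -/

/-- Sum of the `k` largest entries of `η`. -/
def topSum {n : ℕ} (η : Fin n → ℕ) (k : ℕ) : ℕ :=
  ((Finset.univ : Finset (Fin n)).powersetCard (min k n)).sup fun s => ∑ i ∈ s, η i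

/-- Strict dominance order on the sorted rearrangements: `ν⁺ < η⁺`. -/
def DomLT {n : ℕ} (ν η : Fin n → ℕ) : Prop :=
  (∑ i, ν i) = (∑ i, η i) ∧ (∀ k, topSum ν k ≤ topSum η k) ∧ ∃ k, topSum ν k < topSum η k

/-- `ν⁺ = η⁺`. -/
def SortEq {n : ℕ} (ν η : Fin n → ℕ) : Prop := ∀ k, topSum ν k = topSum η k

/-- `w` sorts `η`, i.e. `η = w η⁺` : the map `i ↦ η (w i)` is weakly decreasing. -/
def Sorts {n : ℕ} (w : Equiv.Perm (Fin n)) (η : Fin n → ℕ) : Prop :=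
  ∀ i j : Fin n, i ≤ j → η (w j) ≤ η (w i)

/-- `w` is the minimal length permutation with `η = w η⁺`. -/
def IsMinSort {n : ℕ} (w : Equiv.Perm (Fin n)) (η : Fin n → ℕ) : Prop :=
  Sorts w η ∧ ∀ w', Sorts w' η → invCount w ≤ invCount w'

/-- The Bruhat order on compositions : `ν ≺ η`. -/
def CompLT {n : ℕ} (ν η : Fin n → ℕ) : Prop :=
  DomLT ν η ∨ (SortEq ν η ∧
    ∃ wη wν, IsMinSort wη η ∧ IsMinSort wν ν ∧ BruhatLT wη wν)

/-- The row (1-indexed, from the top) of the `i`-circle in the diagram of `η`. -/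
def rowOf {n : ℕ} (η : Fin n → ℕ) (i : Fin n) : ℕ :=
  (Finset.univ.filter fun j : Fin n => η i < η j ∨ (η j = η i ∧ j ≤ i)).card

/-- The eigenvalue `η̄_i = q^{η_i} t^{1 - r_η(i)}`. -/
def ebar {n : ℕ} (q t : KK) (η : Fin n → ℕ) (i : Fin n) : KK :=
  q ^ η i * t ^ (1 - (rowOf η i : ℤ))

/-- `Inv(a) = #{i < j : a_i < a_j}`. -/
def invA {m : ℕ} (a : Fin m → ℕ) : ℕ :=
  ((Finset.univ : Finset (Fin m × Fin m)).filter fun p => p.1 < p.2 ∧ a p.1 < a p.2).card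

/-- `coInv(a) = #{i < j : a_i ≥ a_j}`. -/
def coinvA {m : ℕ} (a : Fin m → ℕ) : ℕ :=
  ((Finset.univ : Finset (Fin m × Fin m)).filter fun p => p.1 < p.2 ∧ a p.2 ≤ a p.1).card

/-! ## Operators on polynomials -/

section Ops
variable {N : ℕ}

/-- The variable `x_{i+1}` (0-indexed `i`), junk `0` if out of range. -/
def XP (i : ℕ) : Pol N := if h : i < N then MvPolynomial.X (⟨i, h⟩ : Fin N) else 0

/-- The exchange operator `K_{i+1,i+2}` (0-indexed `i`). -/
def exchP (i : ℕ) : Pol N → Pol N :=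
  if h : i + 1 < N then
    fun f => MvPolynomial.rename (Equiv.swap (⟨i, Nat.lt_of_succ_lt h⟩ : Fin N) ⟨i + 1, h⟩) f
  else id

/-- The shift operator sending `x_{i+1} ↦ c·x_{i+1}` (0-indexed `i`). -/
def tauP (c : KK) (i : ℕ) : Pol N → Pol N :=
  if h : i < N then
    fun f => MvPolynomial.aeval
      (fun k : Fin N => if k = ⟨i, h⟩ then c • MvPolynomial.X k else MvPolynomial.X k) f
  else id

/-- `T` is the family of Hecke algebra generators:
`T_i = t + (t x_i - x_{i+1})/(x_i - x_{i+1}) (K_{i,i+1} - 1)`, stated after clearing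
the denominator (`T i` is the operator `T_{i+1}` in 1-indexed notation). -/
def HeckeSpec (t : KK) (T : ℕ → Pol N → Pol N) : Prop :=
  ∀ (i : ℕ), i + 1 < N → ∀ f : Pol N,
    (XP i - XP (i + 1)) * T i f =
      t • ((XP i - XP (i + 1)) * f) +
        (t • XP i - XP (i + 1)) * (exchP i f - f)

/-- Composite of a list of operators (the last element of the list acts first). -/
def opList {α : Type*} (l : List (α → α)) : α → α := l.foldr (· ∘ ·) id

/-- `T̄_i = t⁻¹ - 1 + t⁻¹ T_i`. -/
def TbarP (t : KK) (T : ℕ → Pol N → Pol N) (i : ℕ) : Pol N → Pol N :=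
  fun f => t⁻¹ • f - f + t⁻¹ • T i f

/-- `ω = K_{N-1,N} ⋯ K_{1,2} τ_1`. -/
def omegaP (q : KK) : Pol N → Pol N :=
  opList ((List.range (N - 1)).reverse.map exchP) ∘ tauP q 0

/-- The Cherednik operator `Y_{i+1} = t^{-N+i+1} T_{i+1} ⋯ T_{N-1} ω T̄_1 ⋯ T̄_i`
(0-indexed `i`). -/
def Yop (q t : KK) (T : ℕ → Pol N → Pol N) (i : ℕ) : Pol N → Pol N :=
  fun f => t ^ ((i : ℤ) + 1 - (N : ℤ)) •
    opList ((List.range' i (N - 1 - i)).map T)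
      (omegaP q (opList ((List.range i).map (TbarP t T)) f))

/-- `E` is the family of (monic) non-symmetric Macdonald polynomials: `E η` is the unique
polynomial of the form `x^η + Σ_{ν ≺ η} b_{ην} x^ν` with `Y_i E_η = η̄_i E_η` for all `i`. -/
def NSMacSpec (q t : KK) (T : ℕ → Pol N → Pol N) (E : (Fin N → ℕ) → Pol N) : Prop :=
  ∀ η : Fin N → ℕ,
    MvPolynomial.coeff (Finsupp.equivFunOnFinite.symm η) (E η) = 1 ∧
    (∀ d ∈ (E η).support, (d : Fin N → ℕ) = η ∨ CompLT (d : Fin N → ℕ) η) ∧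
    ∀ i : Fin N, Yop q t T (i : ℕ) (E η) = ebar q t η i • E η

/-- `Tp σ = T_{i_1+m} ⋯ T_{i_ℓ+m}` for a reduced word `σ = s_{i_1} ⋯ s_{i_ℓ}`,
characterized recursively. -/
def TpermSpec (m : ℕ) (T : ℕ → Pol N → Pol N)
    (Tp : Equiv.Perm (Fin (N - m)) → Pol N → Pol N) : Prop :=
  Tp 1 = id ∧
  ∀ (σ : Equiv.Perm (Fin (N - m))) (i : ℕ),
    invCount (σ * adj (N - m) i) = invCount σ + 1 →
    ∀ f, Tp (σ * adj (N - m) i) f = Tp σ (T (i + m) f)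

end Ops

/-- A reduced word for the longest element `ω_m` of `S_m` (0-indexed letters):
`(s_1)(s_2 s_1)(s_3 s_2 s_1) ⋯`. -/
def longWord (m : ℕ) : List ℕ := ((List.range m).map fun k => (List.range k).reverse).flatten

/-! ## m-partitions and their diagrams -/

/-- An `m`-partition `Λ = (a; λ)`: a composition with `m` parts together with a partition
(a weakly decreasing list of positive integers). -/
structure MPart (m : ℕ) where
  a : Fin m → ℕ
  lam : List ℕ
  sorted : lam.Pairwise (· ≥ ·)
  pos : ∀ x ∈ lam, 0 < x

namespace MPart

variable {m : ℕ}

/-- Number of entries of the diagram of `Λ`. -/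
def len (Λ : MPart m) : ℕ := m + Λ.lam.length

/-- The entries of the diagram of `Λ`: entry `k < m` is `a_{k+1}` (a row ending with the
`(k+1)`-circle), entries `m ≤ k < m + ℓ(λ)` are the parts of `λ` listed in increasing order. -/
def gamma (Λ : MPart m) : ℕ → ℕ := fun k =>
  if h : k < m then Λ.a ⟨k, h⟩ else Λ.lam.getD (m + Λ.lam.length - 1 - k) 0

/-- The entries of `Λ` whose row ends with a circle. -/
def circ (Λ : MPart m) : ℕ → Prop := fun k => k < m

/-- The degree `|Λ|`. -/
def deg (Λ : MPart m) : ℕ := (∑ i, Λ.a i) + Λ.lam.sum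

end MPart

/-! ## Arms and legs -/

/-- Row (1-indexed, from the top) of entry `i` in the diagram with `n` entries `γ`;
rows are sorted by decreasing size, entries of equal size ordered by increasing index. -/
def rRowN (n : ℕ) (γ : ℕ → ℕ) (i : ℕ) : ℕ :=
  ((Finset.range n).filter fun j => γ i < γ j ∨ (γ j = γ i ∧ j ≤ i)).card

/-- Arm `a(s)` of the cell in entry `i`, column `j+1`: cells strictly to the right,
a circle ending the row counting as one cell. -/
def armC (γ : ℕ → ℕ) (c : ℕ → Prop) (i j : ℕ) : ℕ :=
  (γ i - (j + 1)) + if c i then 1 else 0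

/-- Arm `ã(s)`: same as `a(s)` but the circle at the end of the row does not count. -/
def armT (γ : ℕ → ℕ) (i j : ℕ) : ℕ := γ i - (j + 1)

/-- Number of squares strictly below the cell in entry `i`, column `j+1`. -/
def belowCnt (n : ℕ) (γ : ℕ → ℕ) (i j : ℕ) : ℕ :=
  ((Finset.range n).filter fun k => rRowN n γ i < rRowN n γ k ∧ j + 1 ≤ γ k).card

/-- Leg `ℓ(s)` of the cell in entry `i`, column `j+1`. -/
def legC (n : ℕ) (γ : ℕ → ℕ) (c : ℕ → Prop) (i j : ℕ) : ℕ :=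
  belowCnt n γ i j +
    if c i then ((Finset.range n).filter fun k => c k ∧ γ k = j ∧ k < i).card else 0

/-- Leg `ℓ̃(s)` of the cell in entry `i`, column `j+1`. -/
def legT (n : ℕ) (γ : ℕ → ℕ) (c : ℕ → Prop) (i j : ℕ) : ℕ :=
  belowCnt n γ i j +
    if c i then ((Finset.range n).filter fun k => c k ∧ γ k = j ∧ k < i).card
    else ((Finset.range n).filter fun k => c k ∧ γ k = j).card

/-- Product over all the squares of a diagram. -/
def prodCells (n : ℕ) (γ : ℕ → ℕ) (f : ℕ → ℕ → KK) : KK :=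
  ∏ i ∈ Finset.range n, ∏ j ∈ Finset.range (γ i), f i j

/-- `∏_{s ∈ Λ} (1 - q^{ã(s)+1} t^{ℓ̃(s)}) / (1 - q^{a(s)} t^{ℓ(s)+1})`. -/
def normProd {m : ℕ} (q t : KK) (Λ : MPart m) : KK :=
  prodCells Λ.len Λ.gamma fun i j =>
    (1 - q ^ (armT Λ.gamma i j + 1) * t ^ legT Λ.len Λ.gamma Λ.circ i j) /
    (1 - q ^ armC Λ.gamma Λ.circ i j * t ^ (legC Λ.len Λ.gamma Λ.circ i j + 1))

/-- The squared norm `q^{|a|} t^{Inv(a)} ∏_{s ∈ Λ} (1-q^{ã(s)+1}t^{ℓ̃(s)})/(1-q^{a(s)}t^{ℓ(s)+1})`. -/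
def normSq {m : ℕ} (q t : KK) (Λ : MPart m) : KK :=
  q ^ (∑ i, Λ.a i) * t ^ invA Λ.a * normProd q t Λ

/-! ## Finite-variable m-symmetric Macdonald polynomials -/

/-- The composition `η_{Λ,N} = (a_1,…,a_m,λ_{N-m},…,λ_1)`. -/
def etaComp {m : ℕ} (Λ : MPart m) (N : ℕ) : Fin N → ℕ := fun k =>
  if h : (k : ℕ) < m then Λ.a ⟨k, h⟩ else Λ.lam.getD (N - 1 - (k : ℕ)) 0

/-- The `t`-factorial `[k]_u! = ∏_{j=1}^k (1-u^j)/(1-u)`. -/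
def tFact (u : KK) (k : ℕ) : KK := ∏ j ∈ Finset.range k, (1 - u ^ (j + 1)) / (1 - u)

/-- The normalization constant `u_{Λ,N}(t)`. -/
def uCoef {m : ℕ} (t : KK) (Λ : MPart m) (N : ℕ) : KK :=
  tFact t⁻¹ (N - m - Λ.lam.length) *
    (∏ i ∈ Λ.lam.toFinset, tFact t⁻¹ (Λ.lam.count i)) *
    t ^ ((N - m) * (N - m - 1) / 2)

/-- The `m`-symmetric Macdonald polynomial in `N` variables,
`P_Λ = u_{Λ,N}(t)⁻¹ S^t_{m+1,N} E_{η_{Λ,N}}`. -/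
def PN {m N : ℕ} (t : KK) (Tp : Equiv.Perm (Fin (N - m)) → Pol N → Pol N)
    (E : (Fin N → ℕ) → Pol N) (Λ : MPart m) : Pol N :=
  (uCoef t Λ N)⁻¹ • ∑ σ : Equiv.Perm (Fin (N - m)), Tp σ (E (etaComp Λ N))

/-! ## The ring of m-symmetric functions -/

/-- The ring `R_m` of `m`-symmetric functions, realized as the polynomial ring on the
variables `x_1,…,x_m` (`Sum.inl`) and the power sums `p̂_{r+1}` (`Sum.inr r`) of the
remaining variables `x_{m+1}, x_{m+2}, …`. -/
abbrev Rm (m : ℕ) : Type := MvPolynomial (Fin m ⊕ ℕ) KK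

/-- The full power sum `p_r = x_1^r + ⋯ + x_m^r + p̂_r` (for `r ≥ 1`). -/
def psumR (m : ℕ) (r : ℕ) : Rm m :=
  (∑ i : Fin m, MvPolynomial.X (Sum.inl i) ^ r) + MvPolynomial.X (Sum.inr (r - 1))

/-- `p_λ = ∏_i p_{λ_i}`. -/
def pPow (m : ℕ) (l : List ℕ) : Rm m := (l.map (psumR m)).prod

/-- `H` is the family of non-symmetric Hall–Littlewood polynomials:
`H_a = x^a` for dominant `a`, and `T_i H_a = H_{s_i a}` when `a_i > a_{i+1}`. -/
def HLSpec {m : ℕ} (Tm : ℕ → Pol m → Pol m) (H : (Fin m → ℕ) → Pol m) : Prop :=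
  (∀ a : Fin m → ℕ, (∀ i j : Fin m, i ≤ j → a j ≤ a i) →
      H a = MvPolynomial.monomial (Finsupp.equivFunOnFinite.symm a) 1) ∧
  ∀ (a : Fin m → ℕ) (i : ℕ) (h : i + 1 < m),
    a ⟨i + 1, h⟩ < a ⟨i, Nat.lt_of_succ_lt h⟩ →
    Tm i (H a) = H (a ∘ (Equiv.swap (⟨i, Nat.lt_of_succ_lt h⟩ : Fin m) ⟨i + 1, h⟩))

/-- The deformed `m`-symmetric power sum `p_Λ(x;t) = H_a(x;t) p_λ(x)`. -/
def pLam {m : ℕ} (H : (Fin m → ℕ) → Pol m) (Λ : MPart m) : Rm m :=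
  MvPolynomial.rename Sum.inl (H Λ.a) * pPow m Λ.lam

/-- `z_λ = ∏ i^{n_λ(i)} n_λ(i)!`. -/
def zNat (l : List ℕ) : ℕ :=
  ∏ i ∈ l.toFinset, i ^ l.count i * (l.count i).factorial

/-- `z_λ(q,t) = z_λ ∏_i (1-q^{λ_i})/(1-t^{λ_i})`. -/
def zQT (q t : KK) (l : List ℕ) : KK :=
  (zNat l : KK) * (l.map fun r => (1 - q ^ r) / (1 - t ^ r)).prod

/-- The scalar product `⟨·,·⟩_m` on `R_m`, defined on the basis `p_Λ(x;t)` by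
`⟨p_Λ, p_Ω⟩_m = δ_{ΛΩ} q^{|a|} t^{Inv(a)} z_λ(q,t)`. -/
def SPSpec {m : ℕ} (q t : KK) (H : (Fin m → ℕ) → Pol m)
    (sp : Rm m →ₗ[KK] Rm m →ₗ[KK] KK) : Prop :=
  ∀ Λ Ω : MPart m, sp (pLam H Λ) (pLam H Ω) =
    if Λ = Ω then q ^ (∑ i, Λ.a i) * t ^ invA Λ.a * zQT q t Λ.lam else 0

/-- Restriction to `N` variables: `x_i ↦ x_i` and `p̂_r ↦ x_{m+1}^r + ⋯ + x_N^r`. -/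
def resN (m N : ℕ) (h : m ≤ N) : Rm m →ₐ[KK] Pol N :=
  MvPolynomial.aeval fun v => match v with
    | Sum.inl i => MvPolynomial.X (Fin.castLE h i)
    | Sum.inr r =>
        ∑ j ∈ Finset.univ.filter (fun j : Fin N => m ≤ (j : ℕ)), MvPolynomial.X j ^ (r + 1)

/-- A complete set of data defining the `m`-symmetric Macdonald polynomials `P Λ ∈ R_m`
with parameters `q`, `t`: Hecke operators, non-symmetric Macdonald polynomials and
`t`-symmetrizers in every number of variables, together with the stable limits `P Λ`. -/
structure MacData (m : ℕ) (q t : KK) where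
  T : (N : ℕ) → ℕ → Pol N → Pol N
  hT : ∀ N, HeckeSpec (N := N) t (T N)
  E : (N : ℕ) → (Fin N → ℕ) → Pol N
  hE : ∀ N, NSMacSpec q t (T N) (E N)
  Tp : (N : ℕ) → Equiv.Perm (Fin (N - m)) → Pol N → Pol N
  hTp : ∀ N, TpermSpec m (T N) (Tp N)
  P : MPart m → Rm m
  hP : ∀ (Λ : MPart m) (N : ℕ) (h : m + Λ.lam.length ≤ N),
    resN m N (by omega) (P Λ) = PN t (Tp N) (E N) Λ

end MSym

namespace MSym

/-! ## Extra combinatorial/analytic helpers -/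

/-- `n(μ) = Σ_i (i-1) μ_i` for the multiset of values `v` on `Finset.range n`,
computed column-by-column as `Σ_j C(μ'_j, 2)`. -/
def nStat (n : ℕ) (v : ℕ → ℕ) : ℕ :=
  ∑ j ∈ Finset.range (∑ k ∈ Finset.range n, v k),
    Nat.choose (((Finset.range n).filter fun k => j + 1 ≤ v k).card) 2

/-- The principal specialization `u_∅ : f ↦ f(1,t,…,t^{N-1})`. -/
def evalPrincipal (N : ℕ) : Pol N →ₐ[KK] KK :=
  MvPolynomial.aeval fun i : Fin N => tq ^ (i : ℕ)

/-- The composition `γ_Λ = (a_1,…,a_m,λ_1,…,λ_ℓ,0^{N-m-ℓ})`. -/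
def gammaVal {m : ℕ} (Λ : MPart m) (N : ℕ) : Fin N → ℕ := fun k =>
  if h : (k : ℕ) < m then Λ.a ⟨k, h⟩ else Λ.lam.getD ((k : ℕ) - m) 0

/-- The evaluation `u_Λ : f ↦ f(q^{-Λ⁰_{w(1)}} t^{w(1)-1}, …)`, where `w` is the minimal
length permutation sorting `γ_Λ`; since `Λ⁰_{w(i)} = (γ_Λ)_i`, the `i`-th argument is
`q^{-(γ_Λ)_i} t^{w(i)-1}`. -/
def uEval {m : ℕ} (Λ : MPart m) (N : ℕ) (w : Equiv.Perm (Fin N)) : Pol N →ₐ[KK] KK :=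
  MvPolynomial.aeval fun i : Fin N =>
    qq ^ (-((gammaVal Λ N i : ℕ) : ℤ)) * tq ^ ((w i : ℕ))

/-- Substitution of the commuting family `Op` into the polynomial `f`, applied to `g`. -/
def substOps {N : ℕ} (f : Pol N) (Op : Fin N → Pol N → Pol N) (g : Pol N) : Pol N :=
  ∑ d ∈ f.support, MvPolynomial.coeff d f •
    (opList (List.ofFn fun i : Fin N => (Op i)^[d i])) g

/-- The `(m+1)`-partition obtained from `Λ` by adding an `(m+1)`-circle at the end of a
symmetric row of size `b`. -/
def addCirc {m : ℕ} (Λ : MPart m) (b : ℕ) : MPart (m + 1) where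
  a := Fin.snoc Λ.a b
  lam := Λ.lam.erase b
  sorted := List.Pairwise.sublist (List.erase_sublist (a := b) (l := Λ.lam)) Λ.sorted
  pos := fun x hx => Λ.pos x (List.mem_of_mem_erase hx)

/-- The coefficient `ψ_{Ω/Λ}` for `Ω = addCirc Λ b`: a product over the squares of the
column of the added circle lying in symmetric rows (`j` runs over the positions, in the
weakly decreasing list `λ`, of the parts of size `≥ b+1`). -/
def psiCoef {m : ℕ} (q t : KK) (Λ : MPart m) (b : ℕ) : KK :=
  ∏ j ∈ Finset.range Λ.lam.length,
    if b + 1 ≤ Λ.lam.getD j 0 then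
      (1 - q ^ (armC Λ.gamma Λ.circ (m + Λ.lam.length - 1 - j) b + 1) *
          t ^ legT Λ.len Λ.gamma Λ.circ (m + Λ.lam.length - 1 - j) b) /
      (1 - q ^ (armC (addCirc Λ b).gamma (addCirc Λ b).circ
            ((m + 1) + (addCirc Λ b).lam.length - 1 - j) b + 1) *
          t ^ legT (addCirc Λ b).len (addCirc Λ b).gamma (addCirc Λ b).circ
            ((m + 1) + (addCirc Λ b).lam.length - 1 - j) b)
    else 1

/-- The inclusion `i : R_m → R_{m+1}`. -/
def inclMap (m : ℕ) : Rm m →ₐ[KK] Rm (m + 1) :=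
  MvPolynomial.aeval fun v => match v with
    | Sum.inl i => MvPolynomial.X (Sum.inl i.castSucc)
    | Sum.inr r => MvPolynomial.X (Sum.inl (Fin.last m)) ^ (r + 1) + MvPolynomial.X (Sum.inr r)

/-- The restriction `r : R_{m+1} → R_m` (set `x_{m+1} = 0` and relabel). -/
def restrMap (m : ℕ) : Rm (m + 1) →ₐ[KK] Rm m :=
  MvPolynomial.aeval fun v => match v with
    | Sum.inl i => if h : (i : ℕ) < m then MvPolynomial.X (Sum.inl (⟨i, h⟩ : Fin m)) else 0
    | Sum.inr r => MvPolynomial.X (Sum.inr r)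

/-- The monomial symmetric polynomial `m_λ` in the variables `x_{m+1},…,x_N`
(inside `K[x_1,…,x_N]`). -/
def msymmAt (N m : ℕ) (l : List ℕ) : Pol N :=
  ((∏ i ∈ l.toFinset, (l.count i).factorial : ℕ) : KK)⁻¹ •
    ∑ g ∈ (Finset.univ.filter fun g : Fin l.length ↪ Fin N => ∀ k, m ≤ ((g k : Fin N) : ℕ)),
      ∏ k : Fin l.length, MvPolynomial.X (g k) ^ l.get k

/-- Partitions, as weakly decreasing lists of positive integers. -/
def PartL : Type := {l : List ℕ // l.Pairwise (· ≥ ·) ∧ ∀ x ∈ l, 0 < x}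

/-! ## Formal power series -/

/-- Coefficient-wise sum of a family of formal power series. -/
def fsum {ι V : Type*} (f : ι → MvPowerSeries V KK) : MvPowerSeries V KK :=
  fun d => ∑ᶠ i, MvPowerSeries.coeff d (f i)

/-- Exchange of the variables `u` and `v` in a formal power series. -/
def pswap {V : Type*} (u v : V) (f : MvPowerSeries V KK) : MvPowerSeries V KK :=
  fun d => f (Finsupp.equivMapDomain (Equiv.swap u v) d)

/-- The substitution `x_v ↦ c·x_v` in a formal power series. -/
def ptau {V : Type*} (c : KK) (v : V) (f : MvPowerSeries V KK) : MvPowerSeries V KK :=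
  fun d => c ^ (d v) * f d

section PS
variable {V : Type*} {N : ℕ}

/-- The variables of a copy of `x_1,…,x_N` inside a power series ring, via `emb`. -/
def xPS (emb : Fin N → V) (i : ℕ) : MvPowerSeries V KK :=
  if h : i < N then MvPowerSeries.X (emb ⟨i, h⟩) else 0

/-- The exchange operator `K_{i+1,i+2}` on the variables selected by `emb`. -/
def pswapE (emb : Fin N → V) (i : ℕ) : MvPowerSeries V KK → MvPowerSeries V KK :=
  if h : i + 1 < N then pswap (emb ⟨i, Nat.lt_of_succ_lt h⟩) (emb ⟨i + 1, h⟩) else id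

/-- The shift `x_{i+1} ↦ c x_{i+1}` on the variables selected by `emb`. -/
def ptauE (emb : Fin N → V) (c : KK) (i : ℕ) : MvPowerSeries V KK → MvPowerSeries V KK :=
  if h : i < N then ptau c (emb ⟨i, h⟩) else id

/-- Hecke operators acting on the `N` variables selected by `emb` inside a formal power
series ring (stated after clearing the denominator). -/
def HeckeSpecPS (t : KK) (emb : Fin N → V)
    (T : ℕ → MvPowerSeries V KK → MvPowerSeries V KK) : Prop :=
  ∀ (i : ℕ), i + 1 < N → ∀ f,
    (xPS emb i - xPS emb (i + 1)) * T i f =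
      t • ((xPS emb i - xPS emb (i + 1)) * f) +
        (t • xPS emb i - xPS emb (i + 1)) * (pswapE emb i f - f)

/-- `T̄_i` on power series. -/
def TbarPS (t : KK) (T : ℕ → MvPowerSeries V KK → MvPowerSeries V KK) (i : ℕ) :
    MvPowerSeries V KK → MvPowerSeries V KK :=
  fun f => t⁻¹ • f - f + t⁻¹ • T i f

/-- `ω` on the variables selected by `emb`. -/
def omegaPS (emb : Fin N → V) (q : KK) : MvPowerSeries V KK → MvPowerSeries V KK :=
  opList ((List.range (N - 1)).reverse.map (pswapE emb)) ∘ ptauE emb q 0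

/-- The Cherednik operator `Y_{i+1}` on the variables selected by `emb`. -/
def YopPS (emb : Fin N → V) (q t : KK)
    (T : ℕ → MvPowerSeries V KK → MvPowerSeries V KK) (i : ℕ) :
    MvPowerSeries V KK → MvPowerSeries V KK :=
  fun f => t ^ ((i : ℤ) + 1 - (N : ℤ)) •
    opList ((List.range' i (N - 1 - i)).map T)
      (omegaPS emb q (opList ((List.range i).map (TbarPS t T)) f))

/-- The operator `D = Y_{m+1} + ⋯ + Y_N - Σ_{i=m+1}^N t^{1-i}`. -/
def Dps (emb : Fin N → V) (m : ℕ) (q t : KK)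
    (T : ℕ → MvPowerSeries V KK → MvPowerSeries V KK) :
    MvPowerSeries V KK → MvPowerSeries V KK :=
  fun f => (∑ i ∈ Finset.Ico m N, YopPS emb q t T i f) -
    (∑ i ∈ Finset.Ico m N, t ^ (-(i : ℤ))) • f

end PS

/-! ## Kernels -/

/-- The variable set for power series in two infinite alphabets adapted to `R_m`. -/
abbrev Wm (m : ℕ) : Type := (Fin m ⊕ ℕ) ⊕ (Fin m ⊕ ℕ)

/-- `R_m` in the `x`-alphabet, inside power series on two alphabets. -/
def embX {m : ℕ} (f : Rm m) : MvPowerSeries (Wm m) KK :=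
  MvPolynomial.coeToMvPowerSeries.ringHom (MvPolynomial.rename (Sum.inl : (Fin m ⊕ ℕ) → Wm m) f)

/-- `R_m` in the `y`-alphabet, inside power series on two alphabets. -/
def embY {m : ℕ} (f : Rm m) : MvPowerSeries (Wm m) KK :=
  MvPolynomial.coeToMvPowerSeries.ringHom (MvPolynomial.rename (Sum.inr : (Fin m ⊕ ℕ) → Wm m) f)

/-- The `x`-variables `x_1,…,x_m`. -/
def xW (m : ℕ) : Fin m → Wm m := fun i => Sum.inl (Sum.inl i)

/-- The `y`-variables `y_1,…,y_m`. -/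
def yW (m : ℕ) : Fin m → Wm m := fun i => Sum.inr (Sum.inl i)

/-- The Macdonald kernel `K_0(x,y) = Σ_λ z_λ(q,t)⁻¹ p_λ(x) p_λ(y)`. -/
def K0R (m : ℕ) (q t : KK) : MvPowerSeries (Wm m) KK :=
  fsum fun l : PartL => (zQT q t l.1)⁻¹ • (embX (pPow m l.1) * embY (pPow m l.1))

/-- The kernel `K_m(x,y) = t^{-C(m,2)} K_0(x,y) T^{(x)}_{ω_m}[G]`, where `G` is the
rational factor (hypothesized separately via its defining equation). -/
def KmR (m : ℕ) (q t : KK)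
    (T : ℕ → MvPowerSeries (Wm m) KK → MvPowerSeries (Wm m) KK)
    (G : MvPowerSeries (Wm m) KK) : MvPowerSeries (Wm m) KK :=
  (t ^ m.choose 2)⁻¹ • (K0R m q t * opList ((longWord m).map T) G)

/-- The defining property of `G = ∏_{i+j≤m}(1 - t q⁻¹ x_i y_j) / ∏_{i+j≤m+1}(1 - q⁻¹ x_i y_j)`. -/
def GSpec (m : ℕ) (q t : KK) (G : MvPowerSeries (Wm m) KK) : Prop :=
  (∏ p ∈ (Finset.univ : Finset (Fin m × Fin m)).filter
      (fun p => (p.1 : ℕ) + (p.2 : ℕ) + 2 ≤ m + 1),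
        (1 - q⁻¹ • (MvPowerSeries.X (xW m p.1) * MvPowerSeries.X (yW m p.2)))) * G =
    ∏ p ∈ (Finset.univ : Finset (Fin m × Fin m)).filter
      (fun p => (p.1 : ℕ) + (p.2 : ℕ) + 2 ≤ m),
        (1 - (t * q⁻¹) • (MvPowerSeries.X (xW m p.1) * MvPowerSeries.X (yW m p.2)))

end MSym

/-!
Both sides are bilinear in `(f, g)`, so it suffices to compare them on the bases `p_Λ` of `R_m`
and `p_Ω` of `R_{m+1}`. The family `p_Λ` is orthogonal with nonzero norms, hence linearly
independent, and it spans: `p_Λ` is weighted homogeneous of degree `|Λ|`, and there are as many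
`m`-partitions of degree at most `n` as monomials of weighted degree at most `n`.

On these bases everything is explicit. Adding a variable does not change the Hall–Littlewood
polynomials, `H_a(x_1,…,x_m) = H_{(a,0)}(x_1,…,x_{m+1})`, so `i(p_{(a;λ)}) = p_{(a,0;λ)}`; the same
identity gives `r(p_{(a,0;λ)}) = p_{(a;λ)}`, while `r(p_Ω) = 0` when `Ω` ends with a nonzero entry,
because `x_{m+1}` divides `H_b` whenever `b_{m+1} > 0`. Since `(a,0)` has the same size and the same
inversions as `a`, both scalar products are `δ_{ΛΩ} q^{|a|} t^{Inv(a)} z_λ(q,t)`.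
-/

open MvPolynomial

theorem Finsupp.finite_setOf_weight_le {σ : Type*} {w : σ → ℕ} (hw : ∀ v, w v ≠ 0) {n : ℕ}
    (hF : {v | w v ≤ n}.Finite) : {d : σ →₀ ℕ | Finsupp.weight w d ≤ n}.Finite := by
  refine (hF.toFinset.finsupp fun _ => Finset.range (n + 1)).finite_toSet.subset fun d hd => ?_
  rw [Finset.mem_coe, Finset.mem_finsupp_iff]
  refine ⟨fun v hv => ?_, fun v _ => ?_⟩
  · rw [Set.Finite.mem_toFinset]
    exact (Finsupp.le_weight_of_ne_zero' w (Finsupp.mem_support_iff.mp hv)).trans hd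
  · exact Finset.mem_range_succ_iff.mpr ((Finsupp.le_weight w (hw v) d).trans hd)

theorem MvPolynomial.IsWeightedHomogeneous.rename {σ τ R M : Type*} [CommSemiring R]
    [AddCommMonoid M] {w : τ → M} {f : σ → τ} {φ : MvPolynomial σ R} {n : M}
    (h : φ.IsWeightedHomogeneous (w ∘ f) n) : (rename f φ).IsWeightedHomogeneous w n := by
  intro d hd
  obtain ⟨u, rfl, hu⟩ := coeff_rename_ne_zero f φ d hd
  rw [← h hu, Finsupp.weight_apply, Finsupp.weight_apply,
    Finsupp.sum_mapDomain_index (h := fun i c => c • w i) (fun _ => zero_smul ℕ _)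
      (fun _ _ _ => add_smul _ _ _)]
  rfl

theorem MvPolynomial.IsHomogeneous.of_mul_left {σ R : Type*} [CommRing R] [IsDomain R]
    {p g : MvPolynomial σ R} {a n : ℕ} (hp : p.IsHomogeneous a) (hp0 : p ≠ 0)
    (hpg : (p * g).IsHomogeneous (a + n)) : g.IsHomogeneous n := by
  have hcomp : ∀ k, homogeneousComponent (a + k) (p * g) = p * homogeneousComponent k g := by
    intro k
    conv_lhs => rw [← sum_homogeneousComponent g, Finset.mul_sum, map_sum]
    rw [Finset.sum_eq_single k]
    · exact (homogeneousComponent_of_mem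
        (hp.mul (homogeneousComponent_isHomogeneous k g))).trans (if_pos rfl)
    · intro j _ hjk
      rw [homogeneousComponent_of_mem (hp.mul (homogeneousComponent_isHomogeneous j g)),
        if_neg (by omega)]
    · intro hk
      rw [homogeneousComponent_eq_zero k g (by simpa using hk), mul_zero, map_zero]
  intro d hd
  rw [show (1 : σ → ℕ) = fun _ => 1 from rfl, ← Finsupp.degree_eq_weight_one (R := ℕ)]
  by_contra hne
  have hk : homogeneousComponent d.degree g = 0 := by
    have := hcomp d.degree
    rw [homogeneousComponent_of_mem hpg, if_neg (by omega)] at this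
    exact (mul_eq_zero.mp this.symm).resolve_left hp0
  apply hd
  simpa [coeff_homogeneousComponent] using congrArg (coeff d) hk

theorem MvPolynomial.span_eq_top_of_linearIndependent_of_isWeightedHomogeneous
    {σ ι K : Type*} [Field K] {w : σ → ℕ}
    (hfin : ∀ n, {d : σ →₀ ℕ | Finsupp.weight w d ≤ n}.Finite)
    {b : ι → MvPolynomial σ K} (hb : LinearIndependent K b) {deg : ι → ℕ}
    (hhom : ∀ i, (b i).IsWeightedHomogeneous w (deg i)) {e : (σ →₀ ℕ) → ι}
    (he : Function.Injective e) (hdeg : ∀ d, deg (e d) = Finsupp.weight w d) :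
    Submodule.span K (Set.range b) = ⊤ := by
  rw [eq_top_iff, ← (basisMonomials σ K).span_eq, Submodule.span_le]
  rintro _ ⟨d, rfl⟩
  set S : Finset (σ →₀ ℕ) := (hfin (Finsupp.weight w d)).toFinset
  set v : ↥(S : Set (σ →₀ ℕ)) → MvPolynomial σ K := fun s => b (e s)
  have hv : LinearIndependent K v := hb.comp _ (he.comp Subtype.val_injective)
  have hle : Submodule.span K (Set.range v) ≤ restrictSupport K S := by
    rw [Submodule.span_le]
    rintro _ ⟨s, rfl⟩ c hc
    have hs := (hfin _).mem_toFinset.mp s.2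
    rw [Finset.mem_coe, Set.Finite.mem_toFinset, Set.mem_ofPred_eq,
      hhom _ (mem_support_iff.mp hc), hdeg]
    exact hs
  have heq : Submodule.span K (Set.range v) = restrictSupport K S := by
    have := Module.Finite.of_basis (basisRestrictSupport K (S : Set (σ →₀ ℕ)))
    refine Submodule.eq_of_le_of_finrank_eq hle ?_
    rw [finrank_span_eq_card hv,
      Module.finrank_eq_card_basis (basisRestrictSupport K (S : Set (σ →₀ ℕ)))]
  have hd : monomial d (1 : K) ∈ restrictSupport K S := by simp [S]
  rw [← heq] at hd
  rw [coe_basisMonomials]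
  exact Submodule.span_mono (Set.range_comp_subset_range _ b) hd

namespace MSym

theorem adj_of_lt {n i : ℕ} (hi : i + 1 < n) :
    adj n i = Equiv.swap ⟨i, Nat.lt_of_succ_lt hi⟩ ⟨i + 1, hi⟩ :=
  dif_pos hi

theorem castSucc_adj {n i : ℕ} (hi : i + 1 < n) (k : Fin n) :
    (adj n i k).castSucc = adj (n + 1) i k.castSucc := by
  rw [adj_of_lt hi, adj_of_lt (Nat.lt_succ_of_lt hi),
    (Fin.castSucc_injective n).map_swap]
  rfl

theorem adj_last {n i : ℕ} (hi : i + 1 < n) : adj (n + 1) i (Fin.last n) = Fin.last n := by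
  rw [adj_of_lt (Nat.lt_succ_of_lt hi)]
  exact Equiv.swap_apply_of_ne_of_ne (by simp [Fin.ext_iff]; omega)
    (by simp [Fin.ext_iff]; omega)

theorem adj_apply_of_ne {n i : ℕ} {j : Fin n} (hjI : (j : ℕ) ≠ i) (hjJ : (j : ℕ) ≠ i + 1) :
    adj n i j = j := by
  unfold adj
  split_ifs
  · exact Equiv.swap_apply_of_ne_of_ne (by simpa [Fin.ext_iff]) (by simpa [Fin.ext_iff])
  · rfl

theorem lt_adj_iff {n i : ℕ} (hi : i + 1 < n) {j : Fin n} (hjI : (j : ℕ) ≠ i)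
    (hjJ : (j : ℕ) ≠ i + 1) (k : Fin n) : j < adj n i k ↔ j < k := by
  rw [adj_of_lt hi, Equiv.swap_apply_def]
  split_ifs <;> simp only [Fin.lt_def, Fin.ext_iff] at * <;> omega

def weightedSum {n : ℕ} (a : Fin n → ℕ) : ℕ := ∑ k : Fin n, (k : ℕ) * a k

theorem weightedSum_comp_adj_lt {n i : ℕ} (hi : i + 1 < n) {a : Fin n → ℕ}
    (hlt : a ⟨i, Nat.lt_of_succ_lt hi⟩ < a ⟨i + 1, hi⟩) :
    weightedSum (a ∘ adj n i) < weightedSum a := by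
  set I : Fin n := ⟨i, Nat.lt_of_succ_lt hi⟩
  set J : Fin n := ⟨i + 1, hi⟩
  have hpt : ∀ k, (adj n i k : ℕ) * a k + (if k = J then a k else 0)
      = (k : ℕ) * a k + (if k = I then a k else 0) := by
    intro k
    rw [adj_of_lt hi, Equiv.swap_apply_def]
    split_ifs <;> subst_vars <;> simp_all [I, J, Fin.ext_iff] <;> ring
  have hsum := Finset.sum_congr rfl fun k (_ : k ∈ Finset.univ) => hpt k
  rw [Finset.sum_add_distrib, Finset.sum_add_distrib, Finset.sum_ite_eq',
    Finset.sum_ite_eq', if_pos (Finset.mem_univ _), if_pos (Finset.mem_univ _)] at hsum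
  have hre : weightedSum (a ∘ adj n i) = ∑ k, (adj n i k : ℕ) * a k := by
    rw [weightedSum, ← Equiv.sum_comp (adj n i)]
    refine Finset.sum_congr rfl fun k _ => ?_
    rw [Function.comp_apply, adj_of_lt hi, Equiv.swap_apply_self]
  rw [hre, weightedSum]
  omega

theorem exists_ascent_of_not_antitone {n : ℕ} {a : Fin n → ℕ} (h : ¬ Antitone a) :
    ∃ i, ∃ hi : i + 1 < n, a ⟨i, Nat.lt_of_succ_lt hi⟩ < a ⟨i + 1, hi⟩ := by
  cases n with
  | zero => exact absurd (fun i => i.elim0) h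
  | succ n =>
    obtain ⟨i, hi⟩ := not_forall.mp (mt Fin.antitone_iff_succ_le.mpr h)
    exact ⟨i, by omega, not_le.mp hi⟩

theorem antitone_induction {n : ℕ} {P : (Fin n → ℕ) → Prop}
    (antitone : ∀ a, Antitone a → P a)
    (ascent : ∀ a i (hi : i + 1 < n), a ⟨i, Nat.lt_of_succ_lt hi⟩ < a ⟨i + 1, hi⟩ →
      P (a ∘ adj n i) → P a)
    (a : Fin n → ℕ) : P a := by
  induction h : weightedSum a using Nat.strong_induction_on generalizing a with
  | _ s ih =>
    by_cases ha : Antitone a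
    · exact antitone a ha
    obtain ⟨i, hi, hlt⟩ := exists_ascent_of_not_antitone ha
    exact ascent a i hi hlt (ih _ (h ▸ weightedSum_comp_adj_lt hi hlt) _ rfl)

section Hecke

variable {N : ℕ} {t : KK} {T : ℕ → Pol N → Pol N}

theorem HeckeSpec.mul_eq (hT : HeckeSpec t T) {i : ℕ} (hi : i + 1 < N) (f : Pol N) :
    (X ⟨i, Nat.lt_of_succ_lt hi⟩ - X ⟨i + 1, hi⟩) * T i f =
      t • ((X ⟨i, Nat.lt_of_succ_lt hi⟩ - X ⟨i + 1, hi⟩) * f) +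
        (t • X ⟨i, Nat.lt_of_succ_lt hi⟩ - X ⟨i + 1, hi⟩) * (rename (adj N i) f - f) := by
  have h := hT i hi f
  rwa [XP, XP, dif_pos (Nat.lt_of_succ_lt hi), dif_pos hi, exchP, dif_pos hi,
    ← adj_of_lt hi] at h

theorem X_sub_X_succ_ne_zero {i : ℕ} (hi : i + 1 < N) :
    (X ⟨i, Nat.lt_of_succ_lt hi⟩ - X ⟨i + 1, hi⟩ : Pol N) ≠ 0 :=
  sub_ne_zero.mpr fun h => by simpa [Fin.ext_iff] using X_injective h

theorem HeckeSpec.isHomogeneous (hT : HeckeSpec t T) {i : ℕ} (hi : i + 1 < N) {f : Pol N}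
    {n : ℕ} (hf : f.IsHomogeneous n) : (T i f).IsHomogeneous n := by
  have hX : ∀ k, (X k : Pol N).IsHomogeneous 1 := isHomogeneous_X KK
  have hD := (hX ⟨i, Nat.lt_of_succ_lt hi⟩).sub (hX ⟨i + 1, hi⟩)
  refine hD.of_mul_left (X_sub_X_succ_ne_zero hi) ?_
  rw [hT.mul_eq hi, smul_eq_C_mul, smul_eq_C_mul]
  exact ((hD.mul hf).C_mul t).add
    ((((hX _).C_mul t).sub (hX _)).mul (hf.rename_isHomogeneous.sub hf))

def substZero (j : Fin N) : Pol N →ₐ[KK] Pol N := aeval (Function.update (X : Fin N → Pol N) j 0)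

theorem substZero_X_self (j : Fin N) : substZero j (X j) = 0 := by
  simp [substZero]

theorem substZero_X_of_ne {j k : Fin N} (h : k ≠ j) : substZero j (X k) = X k := by
  simp [substZero, h]

theorem substZero_rename (σ : Equiv.Perm (Fin N)) (j : Fin N) (f : Pol N) :
    substZero j (rename σ f) = rename σ (substZero (σ.symm j) f) := by
  refine AlgHom.congr_fun (φ₁ := (substZero j).comp (rename σ))
    (φ₂ := (rename σ).comp (substZero (σ.symm j))) (algHom_ext fun k => ?_) f
  by_cases hk : σ k = j
  · subst hk
    simp [substZero]
  · have hk' : k ≠ σ.symm j := fun h => hk (by simp [h])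
    simp [substZero, hk, hk']

theorem HeckeSpec.substZero_eq_zero (hT : HeckeSpec t T) {i : ℕ} (hi : i + 1 < N) {j : Fin N}
    (hjI : (j : ℕ) ≠ i) (hjJ : (j : ℕ) ≠ i + 1) {f : Pol N} (hf : substZero j f = 0) :
    substZero j (T i f) = 0 := by
  have h := congrArg (substZero j) (hT.mul_eq hi f)
  have hadj : (adj N i).symm j = j := by
    rw [Equiv.symm_apply_eq, adj_apply_of_ne hjI hjJ]
  simp only [map_mul, map_sub, map_add, map_smul, substZero_rename, hadj, hf,
    substZero_X_of_ne (j := j) (k := ⟨i, _⟩) (by simpa [Fin.ext_iff] using Ne.symm hjI),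
    substZero_X_of_ne (j := j) (k := ⟨i + 1, hi⟩) (by simpa [Fin.ext_iff] using Ne.symm hjJ),
    map_zero, mul_zero, smul_zero, sub_zero, zero_add] at h
  exact (mul_eq_zero.mp h).resolve_left (X_sub_X_succ_ne_zero hi)

theorem HeckeSpec.substZero_succ (hT : HeckeSpec t T) {i : ℕ} (hi : i + 1 < N) (f : Pol N) :
    substZero ⟨i + 1, hi⟩ (T i f) =
      t • rename (adj N i) (substZero ⟨i, Nat.lt_of_succ_lt hi⟩ f) := by
  have h := congrArg (substZero ⟨i + 1, hi⟩) (hT.mul_eq hi f)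
  have hadj : (adj N i).symm ⟨i + 1, hi⟩ = ⟨i, Nat.lt_of_succ_lt hi⟩ := by
    rw [adj_of_lt hi, Equiv.symm_swap, Equiv.swap_apply_right]
  simp only [map_mul, map_sub, map_add, map_smul, substZero_rename, hadj, substZero_X_self,
    substZero_X_of_ne (j := ⟨i + 1, hi⟩) (k := ⟨i, _⟩) (by simp [Fin.ext_iff]), sub_zero] at h
  refine mul_left_cancel₀ (X_ne_zero (⟨i, Nat.lt_of_succ_lt hi⟩ : Fin N)) ?_
  rw [h, smul_eq_C_mul, smul_eq_C_mul, smul_eq_C_mul]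
  ring

theorem HeckeSpec.rename_castSucc {m : ℕ} {Tm : ℕ → Pol m → Pol m}
    {Tm' : ℕ → Pol (m + 1) → Pol (m + 1)} (hTm : HeckeSpec t Tm) (hTm' : HeckeSpec t Tm')
    {i : ℕ} (hi : i + 1 < m) (f : Pol m) :
    Tm' i (rename Fin.castSucc f) = rename Fin.castSucc (Tm i f) := by
  have hcomm : Fin.castSucc ∘ adj m i = adj (m + 1) i ∘ Fin.castSucc :=
    funext (castSucc_adj hi)
  have h := congrArg (rename Fin.castSucc) (hTm.mul_eq hi f)
  simp only [map_mul, map_sub, map_add, map_smul, rename_X, rename_rename, hcomm,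
    Fin.castSucc_mk] at h
  refine mul_left_cancel₀ (X_sub_X_succ_ne_zero (Nat.lt_succ_of_lt hi)) ?_
  rw [hTm'.mul_eq, rename_rename, h]

end Hecke

theorem snoc_zero_comp_adj {m i : ℕ} (hi : i + 1 < m) (a : Fin m → ℕ) :
    (Fin.snoc a 0 : Fin (m + 1) → ℕ) ∘ adj (m + 1) i = Fin.snoc (a ∘ adj m i) 0 := by
  funext k
  induction k using Fin.lastCases with
  | last => simp [adj_last hi]
  | cast k => simp [← castSucc_adj hi]

theorem antitone_snoc_zero {m : ℕ} {a : Fin m → ℕ} (ha : Antitone a) :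
    Antitone (Fin.snoc a 0 : Fin (m + 1) → ℕ) := by
  intro k l hkl
  induction l using Fin.lastCases with
  | last => simp
  | cast l =>
    induction k using Fin.lastCases with
    | last => exact absurd hkl (not_le.mpr (Fin.castSucc_lt_last l))
    | cast k => simpa using ha (Fin.castSucc_le_castSucc_iff.mp hkl)

theorem mapDomain_castSucc_equivFunOnFinite_symm {m : ℕ} (a : Fin m → ℕ) :
    Finsupp.mapDomain Fin.castSucc (Finsupp.equivFunOnFinite.symm a) =
      Finsupp.equivFunOnFinite.symm (Fin.snoc a 0) := by
  ext k
  induction k using Fin.lastCases with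
  | last =>
    rw [Finsupp.mapDomain_of_notMem_range _ _ fun ⟨k, hk⟩ => (Fin.castSucc_lt_last k).ne hk]
    simp
  | cast k => simp [Finsupp.mapDomain_apply (Fin.castSucc_injective m)]

section HallLittlewood

variable {N : ℕ} {t : KK} {T : ℕ → Pol N → Pol N} {H : (Fin N → ℕ) → Pol N}

theorem HLSpec.eq_T_of_lt (hH : HLSpec T H) {a : Fin N → ℕ} {i : ℕ} (hi : i + 1 < N)
    (hlt : a ⟨i, Nat.lt_of_succ_lt hi⟩ < a ⟨i + 1, hi⟩) : H a = T i (H (a ∘ adj N i)) := by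
  have h := hH.2 (a ∘ adj N i) i hi (by simpa [adj_of_lt hi] using hlt)
  rw [h, ← adj_of_lt hi, Function.comp_assoc]
  congr
  funext k
  simp [adj_of_lt hi]

theorem HLSpec.isHomogeneous (hT : HeckeSpec t T) (hH : HLSpec T H) (a : Fin N → ℕ) :
    (H a).IsHomogeneous (∑ k, a k) := by
  induction a using antitone_induction with
  | antitone a ha =>
    rw [hH.1 a ha]
    exact isHomogeneous_monomial _ (by simp [Finsupp.degree_eq_sum])
  | ascent a i hi hlt ih =>
    rw [hH.eq_T_of_lt hi hlt]
    rw [show ∑ k, (a ∘ adj N i) k = ∑ k, a k from Equiv.sum_comp _ _] at ih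
    exact hT.isHomogeneous hi ih

theorem HLSpec.substZero_eq_zero (hT : HeckeSpec t T) (hH : HLSpec T H) {b : Fin N → ℕ}
    {j : Fin N} (hj : 0 < b j) (hlast : ∀ k, j < k → b k < b j) : substZero j (H b) = 0 := by
  induction b using antitone_induction generalizing j with
  | antitone b hb =>
    rw [hH.1 b hb, substZero, aeval_monomial, Finsupp.prod,
      Finset.prod_eq_zero (i := j) (by simpa using hj.ne') (by simp [hj.ne'])]
    simp
  | ascent b i hi hlt ih =>
    have hcI : b (adj N i ⟨i, Nat.lt_of_succ_lt hi⟩) = b ⟨i + 1, hi⟩ := by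
      rw [adj_of_lt hi, Equiv.swap_apply_left]
    have hcJ : b (adj N i ⟨i + 1, hi⟩) = b ⟨i, Nat.lt_of_succ_lt hi⟩ := by
      rw [adj_of_lt hi, Equiv.swap_apply_right]
    rw [hH.eq_T_of_lt hi hlt]
    by_cases hjJ : (j : ℕ) = i + 1
    · obtain rfl : j = ⟨i + 1, hi⟩ := Fin.ext hjJ
      rw [hT.substZero_succ hi, ih (by simpa [hcI] using hj), map_zero, smul_zero]
      intro k hk
      simp only [Function.comp_apply, hcI]
      by_cases hkJ : (k : ℕ) = i + 1
      · obtain rfl : k = ⟨i + 1, hi⟩ := Fin.ext hkJ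
        rwa [hcJ]
      · rw [adj_apply_of_ne (by simp [Fin.lt_def] at hk; omega) hkJ]
        exact hlast k (by simp [Fin.lt_def] at hk ⊢; omega)
    by_cases hjI : (j : ℕ) = i
    · obtain rfl : j = ⟨i, Nat.lt_of_succ_lt hi⟩ := Fin.ext hjI
      exact absurd (hlast _ (by simp [Fin.lt_def])) (not_lt.mpr hlt.le)
    refine hT.substZero_eq_zero hi hjI hjJ (ih ?_ fun k hk => ?_)
    · simpa [adj_apply_of_ne hjI hjJ] using hj
    · simpa [adj_apply_of_ne hjI hjJ] using hlast _ ((lt_adj_iff hi hjI hjJ k).mpr hk)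

theorem HLSpec.rename_castSucc {m : ℕ} {Tm : ℕ → Pol m → Pol m} {H : (Fin m → ℕ) → Pol m}
    {Tm' : ℕ → Pol (m + 1) → Pol (m + 1)} {H' : (Fin (m + 1) → ℕ) → Pol (m + 1)}
    (hTm : HeckeSpec t Tm) (hH : HLSpec Tm H) (hTm' : HeckeSpec t Tm') (hH' : HLSpec Tm' H')
    (a : Fin m → ℕ) : rename Fin.castSucc (H a) = H' (Fin.snoc a 0) := by
  induction a using antitone_induction with
  | antitone a ha =>
    rw [hH.1 a ha, hH'.1 _ (antitone_snoc_zero ha), rename_monomial,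
      mapDomain_castSucc_equivFunOnFinite_symm]
  | ascent a i hi hlt ih =>
    have hlt' : (Fin.snoc a 0 : Fin (m + 1) → ℕ) (Fin.castSucc ⟨i, Nat.lt_of_succ_lt hi⟩) <
        (Fin.snoc a 0 : Fin (m + 1) → ℕ) (Fin.castSucc ⟨i + 1, hi⟩) := by
      simpa only [Fin.snoc_castSucc] using hlt
    rw [hH.eq_T_of_lt hi hlt, ← hTm.rename_castSucc hTm' hi, ih, ← snoc_zero_comp_adj hi,
      hH'.eq_T_of_lt (Nat.lt_succ_of_lt hi) hlt']

end HallLittlewood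

namespace MPart

variable {m : ℕ}

theorem ext {Λ Ω : MPart m} (ha : Λ.a = Ω.a) (hlam : Λ.lam = Ω.lam) : Λ = Ω := by
  cases Λ; cases Ω; subst ha hlam; rfl

def snocZero (Λ : MPart m) : MPart (m + 1) :=
  ⟨Fin.snoc Λ.a 0, Λ.lam, Λ.sorted, Λ.pos⟩

theorem snocZero_injective : Function.Injective (snocZero : MPart m → MPart (m + 1)) :=
  fun Λ Ω h => ext (by simpa [snocZero] using congrArg (fun Ω : MPart (m + 1) => Fin.init Ω.a) h)
    (congrArg (fun Ω : MPart (m + 1) => Ω.lam) h)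

theorem snocZero_a_last (Λ : MPart m) : Λ.snocZero.a (Fin.last m) = 0 := by
  simp [snocZero]

theorem exists_eq_snocZero {Ω : MPart (m + 1)} (h : Ω.a (Fin.last m) = 0) :
    ∃ Λ : MPart m, Ω = Λ.snocZero :=
  ⟨⟨Fin.init Ω.a, Ω.lam, Ω.sorted, Ω.pos⟩, ext (by simp [snocZero, ← h]) rfl⟩

theorem sum_snocZero_a (Λ : MPart m) : ∑ k, Λ.snocZero.a k = ∑ k, Λ.a k := by
  simp [snocZero, Fin.sum_univ_castSucc]

theorem invA_snocZero_a (Λ : MPart m) : invA Λ.snocZero.a = invA Λ.a := by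
  simp only [invA, Finset.card_filter, Fintype.sum_prod_type, Fin.sum_univ_castSucc]
  simp [snocZero, Fin.castSucc_lt_last]
  exact fun k hk => absurd hk (not_lt.mpr (Fin.le_last _))

end MPart

section InclusionRestriction

variable {m : ℕ}

theorem inclMap_rename_inl (f : Pol m) :
    inclMap m (rename Sum.inl f) = rename Sum.inl (rename Fin.castSucc f) := by
  refine AlgHom.congr_fun (φ₁ := (inclMap m).comp (rename Sum.inl))
    (φ₂ := (rename Sum.inl).comp (rename Fin.castSucc)) (algHom_ext fun k => ?_) f
  simp [inclMap]

theorem restrMap_rename_inl_castSucc (f : Pol m) :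
    restrMap m (rename Sum.inl (rename Fin.castSucc f)) = rename Sum.inl f := by
  refine AlgHom.congr_fun (φ₁ := (restrMap m).comp ((rename Sum.inl).comp (rename Fin.castSucc)))
    (φ₂ := rename Sum.inl) (algHom_ext fun k => ?_) f
  simp [restrMap]

theorem restrMap_rename_inl_substZero_last (g : Pol (m + 1)) :
    restrMap m (rename Sum.inl g) = restrMap m (rename Sum.inl (substZero (Fin.last m) g)) := by
  refine AlgHom.congr_fun (φ₁ := (restrMap m).comp (rename Sum.inl))
    (φ₂ := ((restrMap m).comp (rename Sum.inl)).comp (substZero (Fin.last m)))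
    (algHom_ext fun k => ?_) g
  induction k using Fin.lastCases with
  | last => simp [restrMap, substZero_X_self]
  | cast k => simp [restrMap, substZero_X_of_ne (Fin.castSucc_lt_last k).ne]

theorem inclMap_psumR {r : ℕ} (hr : r ≠ 0) : inclMap m (psumR m r) = psumR (m + 1) r := by
  rw [psumR, psumR, Fin.sum_univ_castSucc]
  simp [inclMap, Nat.sub_add_cancel (Nat.one_le_iff_ne_zero.mpr hr), add_assoc]

theorem restrMap_psumR {r : ℕ} (hr : r ≠ 0) : restrMap m (psumR (m + 1) r) = psumR m r := by
  rw [psumR, psumR, Fin.sum_univ_castSucc]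
  simp [restrMap, zero_pow hr]

theorem inclMap_pPow {l : List ℕ} (hl : ∀ x ∈ l, 0 < x) :
    inclMap m (pPow m l) = pPow (m + 1) l := by
  rw [pPow, pPow, map_list_prod, List.map_map]
  exact congrArg List.prod (List.map_congr_left fun r hr => inclMap_psumR (hl r hr).ne')

theorem restrMap_pPow {l : List ℕ} (hl : ∀ x ∈ l, 0 < x) :
    restrMap m (pPow (m + 1) l) = pPow m l := by
  rw [pPow, pPow, map_list_prod, List.map_map]
  exact congrArg List.prod (List.map_congr_left fun r hr => restrMap_psumR (hl r hr).ne')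

variable {t : KK} {Tm : ℕ → Pol m → Pol m} {H : (Fin m → ℕ) → Pol m}
  {Tm' : ℕ → Pol (m + 1) → Pol (m + 1)} {H' : (Fin (m + 1) → ℕ) → Pol (m + 1)}

theorem inclMap_pLam (hTm : HeckeSpec t Tm) (hH : HLSpec Tm H) (hTm' : HeckeSpec t Tm')
    (hH' : HLSpec Tm' H') (Λ : MPart m) : inclMap m (pLam H Λ) = pLam H' Λ.snocZero := by
  rw [pLam, pLam, map_mul, inclMap_rename_inl, inclMap_pPow Λ.pos,
    hH.rename_castSucc hTm hTm' hH']
  rfl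

theorem restrMap_pLam_snocZero (hTm : HeckeSpec t Tm) (hH : HLSpec Tm H)
    (hTm' : HeckeSpec t Tm') (hH' : HLSpec Tm' H') (Λ : MPart m) :
    restrMap m (pLam H' Λ.snocZero) = pLam H Λ := by
  rw [pLam, pLam, map_mul, show Λ.snocZero.a = Fin.snoc Λ.a 0 from rfl,
    ← hH.rename_castSucc hTm hTm' hH', restrMap_rename_inl_castSucc]
  exact congrArg _ (restrMap_pPow Λ.pos)

theorem restrMap_pLam_of_ne_zero (hTm' : HeckeSpec t Tm') (hH' : HLSpec Tm' H')
    {Ω : MPart (m + 1)} (h : Ω.a (Fin.last m) ≠ 0) : restrMap m (pLam H' Ω) = 0 := by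
  rw [pLam, map_mul, restrMap_rename_inl_substZero_last,
    hH'.substZero_eq_zero hTm' (Nat.pos_of_ne_zero h)
      fun k hk => absurd hk (not_lt.mpr (Fin.le_last k)),
    map_zero, map_zero, zero_mul]

end InclusionRestriction

/-- The grading of `R_m`: `x_i` has degree `1` and `p̂_{r+1}` has degree `r + 1`. -/
def rmWeight (m : ℕ) : Fin m ⊕ ℕ → ℕ := Sum.elim (fun _ => 1) (· + 1)

section Grading

variable {m : ℕ}

theorem finite_setOf_weight_rmWeight_le (n : ℕ) :
    {d : Fin m ⊕ ℕ →₀ ℕ | Finsupp.weight (rmWeight m) d ≤ n}.Finite := by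
  refine Finsupp.finite_setOf_weight_le (fun v => by cases v <;> simp [rmWeight]) ?_
  refine (Set.finite_range (Sum.inl : Fin m → Fin m ⊕ ℕ)).union
    ((Set.finite_Iio n).image Sum.inr) |>.subset ?_
  rintro (k | r) hr
  · exact Or.inl ⟨k, rfl⟩
  · have hr' : r + 1 ≤ n := hr
    exact Or.inr (Set.mem_image_of_mem Sum.inr (Set.mem_Iio.mpr hr'))

theorem isWeightedHomogeneous_psumR {r : ℕ} (hr : r ≠ 0) :
    (psumR m r).IsWeightedHomogeneous (rmWeight m) r := by
  refine (IsWeightedHomogeneous.sum _ _ _ fun k _ => ?_).add ?_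
  · simpa [rmWeight] using (isWeightedHomogeneous_X KK (rmWeight m) (Sum.inl k)).pow r
  · simpa [rmWeight, Nat.sub_add_cancel (Nat.one_le_iff_ne_zero.mpr hr)] using
      isWeightedHomogeneous_X KK (rmWeight m) (Sum.inr (r - 1))

theorem isWeightedHomogeneous_pPow {l : List ℕ} (hl : ∀ x ∈ l, 0 < x) :
    (pPow m l).IsWeightedHomogeneous (rmWeight m) l.sum := by
  have := WeightedHomogeneousSubmodule.gradedMonoid (R := KK) (w := rmWeight m)
  have := SetLike.list_prod_map_mem_graded (A := weightedHomogeneousSubmodule KK (rmWeight m))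
    l id (psumR m) fun r hr => isWeightedHomogeneous_psumR (hl r hr).ne'
  rwa [List.map_id] at this

theorem isWeightedHomogeneous_pLam {t : KK} {T : ℕ → Pol m → Pol m} {H : (Fin m → ℕ) → Pol m}
    (hT : HeckeSpec t T) (hH : HLSpec T H) (Λ : MPart m) :
    (pLam H Λ).IsWeightedHomogeneous (rmWeight m) Λ.deg :=
  IsWeightedHomogeneous.mul (IsWeightedHomogeneous.rename (w := rmWeight m) (f := Sum.inl)
    (hH.isHomogeneous hT Λ.a)) (isWeightedHomogeneous_pPow Λ.pos)

end Grading

namespace MPart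

variable {m : ℕ}

/-- The `m`-partition `(b; μ)` read off the exponent of the monomial `x^b p̂_μ` of `R_m`. -/
def ofExponent (d : Fin m ⊕ ℕ →₀ ℕ) : MPart m where
  a k := d (Sum.inl k)
  lam := ((d.comapDomain Sum.inr Sum.inr_injective.injOn).toMultiset.map (· + 1)).sort (· ≥ ·)
  sorted := Multiset.pairwise_sort _ _
  pos x hx := by
    simp only [Multiset.mem_sort, Multiset.mem_map] at hx
    obtain ⟨r, -, rfl⟩ := hx
    exact r.succ_pos

theorem ofExponent_injective : Function.Injective (ofExponent (m := m)) := by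
  intro d d' h
  have hlam := congrArg (fun Λ : MPart m => (Λ.lam : Multiset ℕ)) h
  simp only [ofExponent, Multiset.sort_eq] at hlam
  have hinr := Multiset.map_injective (add_left_injective 1) hlam
  ext (k | r)
  · exact congrFun (congrArg MPart.a h) k
  · simpa using congrArg (Multiset.count r) hinr

theorem deg_ofExponent (d : Fin m ⊕ ℕ →₀ ℕ) :
    (ofExponent d).deg = Finsupp.weight (rmWeight m) d := by
  conv_rhs => rw [← Finsupp.comapDomain_sumElim_comapDomain d]
  have hlam : (ofExponent d).lam.sum =
      ((d.comapDomain Sum.inr Sum.inr_injective.injOn).toMultiset.map (· + 1)).sum :=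
    (Multiset.sum_coe _).symm.trans (congrArg Multiset.sum (Multiset.sort_eq _ _))
  rw [deg, hlam, Finsupp.weight_apply, Finsupp.sum_sumElim, Finsupp.toMultiset_map,
    Finsupp.sum_toMultiset,
    Finsupp.sum_mapDomain_index (h := fun a n => n • a) (fun _ => zero_smul ℕ _)
      (fun _ _ _ => add_smul _ _ _)]
  congr 1
  simp [Finsupp.sum_fintype, rmWeight, ofExponent]

end MPart

theorem algebraMap_X_ne_zero (i : Fin 2) : algebraMap (MvPolynomial (Fin 2) ℚ) KK (X i) ≠ 0 :=
  (map_ne_zero_iff _ (IsFractionRing.injective (MvPolynomial (Fin 2) ℚ) KK)).mpr (X_ne_zero i)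

theorem algebraMap_X_pow_ne_one (i : Fin 2) {r : ℕ} (hr : r ≠ 0) :
    algebraMap (MvPolynomial (Fin 2) ℚ) KK (X i) ^ r ≠ 1 := by
  rw [← map_pow, ← map_one (algebraMap (MvPolynomial (Fin 2) ℚ) KK),
    (IsFractionRing.injective (MvPolynomial (Fin 2) ℚ) KK).ne_iff]
  intro h
  simpa [coeff_X_pow, hr] using congrArg (coeff 0) h

theorem zQT_ne_zero {l : List ℕ} (hl : ∀ x ∈ l, 0 < x) : zQT qq tq l ≠ 0 := by
  refine mul_ne_zero (Nat.cast_ne_zero.mpr (Finset.prod_pos fun i hi => ?_).ne')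
    (List.prod_ne_zero fun h => ?_)
  · have := hl i (List.mem_toFinset.mp hi)
    positivity
  · obtain ⟨r, hr, h0⟩ := List.mem_map.mp h
    have hr0 := (hl r hr).ne'
    exact div_ne_zero (sub_ne_zero.mpr (algebraMap_X_pow_ne_one 0 hr0).symm)
      (sub_ne_zero.mpr (algebraMap_X_pow_ne_one 1 hr0).symm) h0

section Basis

variable {m : ℕ} {H : (Fin m → ℕ) → Pol m} {sp : Rm m →ₗ[KK] Rm m →ₗ[KK] KK}

theorem linearIndependent_pLam (hsp : SPSpec qq tq H sp) : LinearIndependent KK (pLam H) := by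
  refine LinearMap.BilinForm.linearIndependent_of_iIsOrtho (B := sp)
    (fun Λ Ω h => (hsp Λ Ω).trans (if_neg h)) fun Λ => ?_
  rw [hsp, if_pos rfl]
  exact mul_ne_zero (mul_ne_zero (pow_ne_zero _ (algebraMap_X_ne_zero 0))
    (pow_ne_zero _ (algebraMap_X_ne_zero 1))) (zQT_ne_zero Λ.pos)

variable {t : KK} {T : ℕ → Pol m → Pol m}

theorem span_pLam (hT : HeckeSpec t T) (hH : HLSpec T H) (hsp : SPSpec qq tq H sp) :
    Submodule.span KK (Set.range (pLam H)) = ⊤ :=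
  span_eq_top_of_linearIndependent_of_isWeightedHomogeneous finite_setOf_weight_rmWeight_le
    (linearIndependent_pLam hsp) (isWeightedHomogeneous_pLam hT hH)
    MPart.ofExponent_injective MPart.deg_ofExponent

def pLamBasis (hT : HeckeSpec t T) (hH : HLSpec T H) (hsp : SPSpec qq tq H sp) :
    Module.Basis (MPart m) KK (Rm m) :=
  Module.Basis.mk (linearIndependent_pLam hsp) (span_pLam hT hH hsp).ge

theorem coe_pLamBasis (hT : HeckeSpec t T) (hH : HLSpec T H) (hsp : SPSpec qq tq H sp) :
    ⇑(pLamBasis hT hH hsp) = pLam H :=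
  Module.Basis.coe_mk _ _

end Basis

/-- Proposition `propir`: adjointness of inclusion and restriction,
`⟨i(f), g⟩_{m+1} = ⟨f, r(g)⟩_m`. -/
theorem msym_inclusion_restriction_adjoint
    (m : ℕ)
    (Tm : ℕ → Pol m → Pol m) (hTm : HeckeSpec tq Tm)
    (H : (Fin m → ℕ) → Pol m) (hH : HLSpec Tm H)
    (sp : Rm m →ₗ[KK] Rm m →ₗ[KK] KK) (hsp : SPSpec qq tq H sp)
    (Tm' : ℕ → Pol (m + 1) → Pol (m + 1)) (hTm' : HeckeSpec tq Tm')
    (H' : (Fin (m + 1) → ℕ) → Pol (m + 1)) (hH' : HLSpec Tm' H')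
    (sp' : Rm (m + 1) →ₗ[KK] Rm (m + 1) →ₗ[KK] KK) (hsp' : SPSpec qq tq H' sp') :
    ∀ (f : Rm m) (g : Rm (m + 1)),
      sp' (inclMap m f) g = sp f (restrMap m g) := by
  have hB : sp'.comp (inclMap m).toLinearMap = sp.compl₂ (restrMap m).toLinearMap := by
    refine LinearMap.ext_basis (pLamBasis hTm hH hsp) (pLamBasis hTm' hH' hsp') fun Λ Ω => ?_
    simp only [coe_pLamBasis, LinearMap.comp_apply, LinearMap.compl₂_apply,
      AlgHom.toLinearMap_apply, inclMap_pLam hTm hH hTm' hH']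
    by_cases hΩ : Ω.a (Fin.last m) = 0
    · obtain ⟨Ω, rfl⟩ := MPart.exists_eq_snocZero hΩ
      rw [restrMap_pLam_snocZero hTm hH hTm' hH', hsp', hsp, MPart.snocZero_injective.eq_iff,
        MPart.sum_snocZero_a, MPart.invA_snocZero_a]
      rfl
    · rw [restrMap_pLam_of_ne_zero hTm' hH' hΩ, map_zero, hsp', if_neg]
      rintro rfl
      exact hΩ (MPart.snocZero_a_last Λ)
  exact fun f g => LinearMap.congr_fun₂ hB f g

end MSym
end
end

section
/- Let N ≥ m and set K̄_m(x_{(N)},y_{(N)}) = K_0(x_{(N)},y_{(N)})·[∏_{i+j≤m}(1 − t·q^{−1}·x_i·y_j) / ∏_{i+j≤m+1}(1 − q^{−1}·x_i·y_j)]. Then for each i = 1,…,m−1, T_i^{(x)}·K̄_m(x_{(N)},y_{(N)}) = T_{m−i}^{(y)}·K̄_m(x_{(N)},y_{(N)}). -/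
open scoped BigOperators Classical

noncomputable section

namespace MSym

/-- Power sum `p_r` in `N` variables. -/
def psumN (N r : ℕ) : Pol N := ∑ i : Fin N, MvPolynomial.X i ^ r

/-- `p_λ` in `N` variables. -/
def pPowN (N : ℕ) (l : List ℕ) : Pol N := (l.map (psumN N)).prod

/-- `x`-embedding of `K[x_1,…,x_N]` into power series in `x_{(N)}, y_{(N)}`. -/
def embXN {N : ℕ} (p : Pol N) : MvPowerSeries (Fin N ⊕ Fin N) KK :=
  MvPolynomial.coeToMvPowerSeries.ringHom (MvPolynomial.rename (Sum.inl : Fin N → Fin N ⊕ Fin N) p)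

/-- `y`-embedding of `K[y_1,…,y_N]` into power series in `x_{(N)}, y_{(N)}`. -/
def embYN {N : ℕ} (p : Pol N) : MvPowerSeries (Fin N ⊕ Fin N) KK :=
  MvPolynomial.coeToMvPowerSeries.ringHom (MvPolynomial.rename (Sum.inr : Fin N → Fin N ⊕ Fin N) p)

/-- The kernel `K_0(x_{(N)}, y_{(N)})`. -/
def K0NN (N : ℕ) : MvPowerSeries (Fin N ⊕ Fin N) KK :=
  fsum fun l : PartL => (zQT qq tq l.1)⁻¹ • (embXN (pPowN N l.1) * embYN (pPowN N l.1))

/-- The defining property of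
`G = ∏_{i+j≤m}(1-t q⁻¹ x_i y_j)/∏_{i+j≤m+1}(1-q⁻¹ x_i y_j)` in `N + N` variables. -/
def GSpecN (m N : ℕ) (G : MvPowerSeries (Fin N ⊕ Fin N) KK) : Prop :=
  (∏ p ∈ (Finset.univ : Finset (Fin N × Fin N)).filter
      (fun p => (p.1 : ℕ) + (p.2 : ℕ) + 2 ≤ m + 1),
        (1 - qq⁻¹ • (MvPowerSeries.X (Sum.inl p.1 : Fin N ⊕ Fin N) * MvPowerSeries.X (Sum.inr p.2)))) *
      G =
    ∏ p ∈ (Finset.univ : Finset (Fin N × Fin N)).filter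
      (fun p => (p.1 : ℕ) + (p.2 : ℕ) + 2 ≤ m),
        (1 - (tq * qq⁻¹) • (MvPowerSeries.X (Sum.inl p.1 : Fin N ⊕ Fin N) * MvPowerSeries.X (Sum.inr p.2)))

/-!
`K₀` is symmetric in each alphabet, so with `a = x_i`, `b = x_{i+1}`, `c = y_{m-i}`,
`d = y_{m-i+1}` both sides only depend on how `G` transforms under `a ↔ b` and `c ↔ d`.
Since `i + (m-i) = m`, exchanging these two rows (or columns) changes exactly one factor of each
staircase product, so `G = R · (1 - t q⁻¹ a c) / ((1 - q⁻¹ a c)(1 - q⁻¹ a d)(1 - q⁻¹ b c))`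
with `R` invariant under both exchanges. After clearing the denominators `a - b` and `c - d`
of the two Hecke operators, the claim becomes a polynomial identity in `a, b, c, d`.
-/

section Algebra

variable {K R : Type*} [CommRing K] [CommRing R] [NoZeroDivisors R] [Algebra K R]

/-- `Fx` and `Fy` are `F` with `a ↔ b`, resp. `c ↔ d`, exchanged, for
`F = R · (1 - t v a c) / ((1 - v a c)(1 - v a d)(1 - v b c))` with `R` symmetric in both pairs. -/
theorem hecke_eq_of_swap_relations {a b c d F Fx Fy T₁ T₂ : R} {t v : K}
    (hx : (a - b) * T₁ = t • ((a - b) * F) + (t • a - b) * (Fx - F))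
    (hy : (c - d) * T₂ = t • ((c - d) * F) + (t • c - d) * (Fy - F))
    (hFx : (1 - v • (b * d)) * (1 - (t * v) • (a * c)) * Fx =
      (1 - v • (a * d)) * (1 - (t * v) • (b * c)) * F)
    (hFy : (1 - v • (b * d)) * (1 - (t * v) • (a * c)) * Fy =
      (1 - v • (b * c)) * (1 - (t * v) • (a * d)) * F)
    (hab : a ≠ b) (hcd : c ≠ d) (hP : (1 - v • (b * d)) * (1 - (t * v) • (a * c)) ≠ 0) :
    T₁ = T₂ := by
  simp only [Algebra.smul_def, map_mul] at *
  set t' := algebraMap K R t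
  set v' := algebraMap K R v
  refine mul_left_cancel₀ hP (mul_left_cancel₀ (sub_ne_zero.mpr hcd)
    (mul_left_cancel₀ (sub_ne_zero.mpr hab) ?_))
  linear_combination (c - d) * ((1 - v' * (b * d)) * (1 - t' * v' * (a * c))) * hx
    - (a - b) * ((1 - v' * (b * d)) * (1 - t' * v' * (a * c))) * hy
    + (c - d) * (t' * a - b) * hFx - (a - b) * (t' * c - d) * hFy

end Algebra

theorem mul_map_eq_of_mul_eq {R F : Type*} [CommRing R] [NoZeroDivisors R] [FunLike F R R]
    [RingHomClass F R R] (φ : F)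
    {D Nu G a b c d : R} (hD : D ≠ 0) (hG : D * G = Nu) (hDφ : a * φ D = b * D)
    (hNuφ : c * φ Nu = d * Nu) : b * c * φ G = a * d * G := by
  have hφG : φ D * φ G = φ Nu := by rw [← map_mul, hG]
  refine mul_left_cancel₀ hD ?_
  linear_combination c * φ G * hDφ.symm + a * c * hφG + a * hNuφ - a * d * hG

section Rename

variable {V : Type*}

theorem coeff_rename_equiv {R : Type*} [CommSemiring R] (e : V ≃ V) (f : MvPowerSeries V R)
    (d : V →₀ ℕ) :
    MvPowerSeries.coeff d (MvPowerSeries.rename e f) =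
      MvPowerSeries.coeff (d.equivMapDomain e.symm) f := by
  have hd : d = Finsupp.embDomain e.toEmbedding (d.equivMapDomain e.symm) := by
    ext v
    obtain ⟨w, rfl⟩ := e.surjective v
    rw [show e w = e.toEmbedding w from rfl, Finsupp.embDomain_apply_self]
    simp
  conv_lhs => rw [hd]
  exact MvPowerSeries.coeff_embDomain_rename _ _ _

theorem pswap_eq_rename [DecidableEq V] (u v : V) (f : MvPowerSeries V KK) :
    pswap u v f = MvPowerSeries.rename (Equiv.swap u v) f := by
  obtain rfl : ‹DecidableEq V› = fun a b => Classical.propDecidable (a = b) :=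
    Subsingleton.elim _ _
  ext d
  rw [coeff_rename_equiv, Equiv.symm_swap]
  rfl

theorem coeff_fsum {ι : Type*} (f : ι → MvPowerSeries V KK) (d : V →₀ ℕ) :
    MvPowerSeries.coeff d (fsum f) = ∑ᶠ i, MvPowerSeries.coeff d (f i) :=
  rfl

theorem rename_fsum {ι : Type*} (e : V ≃ V) (f : ι → MvPowerSeries V KK) :
    MvPowerSeries.rename e (fsum f) = fsum fun i => MvPowerSeries.rename e (f i) := by
  ext d
  simp only [coeff_fsum, coeff_rename_equiv]

variable {N : ℕ}

theorem HeckeSpecPS.X_sub_X_mul_apply [DecidableEq V] {t : KK} {emb : Fin N → V}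
    {T : ℕ → MvPowerSeries V KK → MvPowerSeries V KK} (hT : HeckeSpecPS t emb T) {i : ℕ}
    (hi : i + 1 < N) (f : MvPowerSeries V KK) :
    (MvPowerSeries.X (emb ⟨i, by omega⟩) - MvPowerSeries.X (emb ⟨i + 1, hi⟩)) * T i f =
      t • ((MvPowerSeries.X (emb ⟨i, by omega⟩) - MvPowerSeries.X (emb ⟨i + 1, hi⟩)) * f) +
        (t • MvPowerSeries.X (emb ⟨i, by omega⟩) - MvPowerSeries.X (emb ⟨i + 1, hi⟩)) *
          (MvPowerSeries.rename (Equiv.swap (emb ⟨i, by omega⟩) (emb ⟨i + 1, hi⟩)) f - f) := by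
  have h := hT i hi f
  rwa [xPS, dif_pos (by omega), xPS, dif_pos hi, pswapE, dif_pos hi, pswap_eq_rename] at h

end Rename

section Kernel

variable {N : ℕ}

theorem rename_pPowN (σ : Equiv.Perm (Fin N)) (l : List ℕ) :
    MvPolynomial.rename σ (pPowN N l) = pPowN N l := by
  have hpsum : ∀ r, MvPolynomial.rename σ (psumN N r) = psumN N r := fun r => by
    simp only [psumN, map_sum, map_pow, MvPolynomial.rename_X]
    exact Equiv.sum_comp σ fun k => MvPolynomial.X k ^ r
  simp only [pPowN, map_list_prod, List.map_map, Function.comp_def, hpsum]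

theorem rename_sumCongr_embXN (σ τ : Equiv.Perm (Fin N)) (P : Pol N) :
    MvPowerSeries.rename (Equiv.sumCongr σ τ) (embXN P) = embXN (MvPolynomial.rename σ P) := by
  simp only [embXN, MvPolynomial.coeToMvPowerSeries.ringHom_apply, MvPowerSeries.rename_coe,
    MvPolynomial.rename_rename]
  rfl

theorem rename_sumCongr_embYN (σ τ : Equiv.Perm (Fin N)) (P : Pol N) :
    MvPowerSeries.rename (Equiv.sumCongr σ τ) (embYN P) = embYN (MvPolynomial.rename τ P) := by
  simp only [embYN, MvPolynomial.coeToMvPowerSeries.ringHom_apply, MvPowerSeries.rename_coe,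
    MvPolynomial.rename_rename]
  rfl

theorem rename_sumCongr_K0NN (σ τ : Equiv.Perm (Fin N)) :
    MvPowerSeries.rename (Equiv.sumCongr σ τ) (K0NN N) = K0NN N := by
  simp only [K0NN, rename_fsum, map_smul, map_mul, rename_sumCongr_embXN, rename_sumCongr_embYN,
    rename_pPowN]

end Kernel

theorem mul_prod_comp_perm {α M : Type*} [CommMonoid M] [DecidableEq α] {S : Finset α}
    {σ : Equiv.Perm α} {a b : α} (ha : a ∉ S.map σ.toEmbedding) (hb : b ∉ S)
    (hS : insert a (S.map σ.toEmbedding) = insert b S) (f : α → M) :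
    f a * ∏ p ∈ S, f (σ p) = f b * ∏ p ∈ S, f p := by
  rw [← Finset.prod_insert hb, ← hS, Finset.prod_insert ha, Finset.prod_map]
  rfl

section Staircase

variable {N : ℕ}

def linFactor (s : KK) (p : Fin N × Fin N) : MvPowerSeries (Fin N ⊕ Fin N) KK :=
  1 - s • (MvPowerSeries.X (Sum.inl p.1 : Fin N ⊕ Fin N) * MvPowerSeries.X (Sum.inr p.2))

def staircase (N c : ℕ) : Finset (Fin N × Fin N) :=
  (Finset.univ : Finset (Fin N × Fin N)).filter fun p => (p.1 : ℕ) + (p.2 : ℕ) + 2 ≤ c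

theorem gSpecN_iff {m : ℕ} {G : MvPowerSeries (Fin N ⊕ Fin N) KK} :
    GSpecN m N G ↔
      (∏ p ∈ staircase N (m + 1), linFactor qq⁻¹ p) * G =
        ∏ p ∈ staircase N m, linFactor (tq * qq⁻¹) p :=
  Iff.rfl

theorem linFactor_ne_zero (s : KK) (p : Fin N × Fin N) : linFactor s p ≠ 0 := by
  intro h
  simpa [linFactor, MvPowerSeries.smul_eq_C_mul] using congrArg MvPowerSeries.constantCoeff h

theorem rename_sumCongr_linFactor (σ τ : Equiv.Perm (Fin N)) (s : KK) (p : Fin N × Fin N) :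
    MvPowerSeries.rename (Equiv.sumCongr σ τ) (linFactor s p) = linFactor s (σ p.1, τ p.2) := by
  simp only [linFactor, map_sub, map_one, map_smul, map_mul, MvPowerSeries.rename_X]
  rfl

theorem mul_prod_stair_swap_fst {M : Type*} [CommMonoid M] (f : Fin N × Fin N → M)
    {a a' b : Fin N} {c : ℕ} (ha' : (a' : ℕ) = a + 1) (hc : (a : ℕ) + b + 2 = c) :
    f (a, b) * ∏ p ∈ staircase N c, f (Equiv.swap a a' p.1, p.2) =
      f (a', b) * ∏ p ∈ staircase N c, f p := by
  refine mul_prod_comp_perm (σ := Equiv.prodCongr (Equiv.swap a a') (Equiv.refl _)) ?_ ?_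
    (Finset.ext fun p => ?_) f <;>
    simp only [staircase, Finset.mem_insert, Finset.mem_map_equiv, Finset.mem_filter,
      Finset.mem_univ, true_and, Prod.ext_iff, Equiv.prodCongr_symm, Equiv.prodCongr_apply,
      Equiv.symm_swap, Equiv.refl_symm, Equiv.refl_apply, Prod.map_fst, Prod.map_snd,
      Equiv.swap_apply_def, Fin.ext_iff] <;>
    (try split_ifs) <;> omega

theorem mul_prod_stair_swap_snd {M : Type*} [CommMonoid M] (f : Fin N × Fin N → M)
    {a b b' : Fin N} {c : ℕ} (hb' : (b' : ℕ) = b + 1) (hc : (a : ℕ) + b + 2 = c) :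
    f (a, b) * ∏ p ∈ staircase N c, f (p.1, Equiv.swap b b' p.2) =
      f (a, b') * ∏ p ∈ staircase N c, f p := by
  refine mul_prod_comp_perm (σ := Equiv.prodCongr (Equiv.refl _) (Equiv.swap b b')) ?_ ?_
    (Finset.ext fun p => ?_) f <;>
    simp only [staircase, Finset.mem_insert, Finset.mem_map_equiv, Finset.mem_filter,
      Finset.mem_univ, true_and, Prod.ext_iff, Equiv.prodCongr_symm, Equiv.prodCongr_apply,
      Equiv.symm_swap, Equiv.refl_symm, Equiv.refl_apply, Prod.map_fst, Prod.map_snd,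
      Equiv.swap_apply_def, Fin.ext_iff] <;>
    (try split_ifs) <;> omega

theorem rename_sumCongr_prod_linFactor (σ τ : Equiv.Perm (Fin N)) (s : KK)
    (S : Finset (Fin N × Fin N)) :
    MvPowerSeries.rename (Equiv.sumCongr σ τ) (∏ p ∈ S, linFactor s p) =
      ∏ p ∈ S, linFactor s (σ p.1, τ p.2) := by
  simp only [map_prod, rename_sumCongr_linFactor]

theorem prod_linFactor_ne_zero (s : KK) (S : Finset (Fin N × Fin N)) :
    ∏ p ∈ S, linFactor s p ≠ 0 :=
  Finset.prod_ne_zero_iff.mpr fun p _ => linFactor_ne_zero s p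

end Staircase

section GSpecN

variable {m N : ℕ} {G : MvPowerSeries (Fin N ⊕ Fin N) KK}

theorem GSpecN.mul_rename_swap_inl (hG : GSpecN m N G) {a a' b b' : Fin N}
    (ha' : (a' : ℕ) = a + 1) (hb' : (b' : ℕ) = b + 1) (hm : (a : ℕ) + b + 2 = m) :
    linFactor qq⁻¹ (a', b') * linFactor (tq * qq⁻¹) (a, b) *
        MvPowerSeries.rename (Equiv.swap (Sum.inl a) (Sum.inl a')) G =
      linFactor qq⁻¹ (a, b') * linFactor (tq * qq⁻¹) (a', b) * G := by
  rw [← Equiv.Perm.sumCongr_swap_refl]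
  refine mul_map_eq_of_mul_eq _ (prod_linFactor_ne_zero _ _) (gSpecN_iff.mp hG) ?_ ?_
  · rw [rename_sumCongr_prod_linFactor]
    exact mul_prod_stair_swap_fst (linFactor qq⁻¹) ha' (by omega)
  · rw [rename_sumCongr_prod_linFactor]
    exact mul_prod_stair_swap_fst (linFactor (tq * qq⁻¹)) ha' hm

theorem GSpecN.mul_rename_swap_inr (hG : GSpecN m N G) {a a' b b' : Fin N}
    (ha' : (a' : ℕ) = a + 1) (hb' : (b' : ℕ) = b + 1) (hm : (a : ℕ) + b + 2 = m) :
    linFactor qq⁻¹ (a', b') * linFactor (tq * qq⁻¹) (a, b) *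
        MvPowerSeries.rename (Equiv.swap (Sum.inr b) (Sum.inr b')) G =
      linFactor qq⁻¹ (a', b) * linFactor (tq * qq⁻¹) (a, b') * G := by
  rw [← Equiv.Perm.sumCongr_refl_swap]
  refine mul_map_eq_of_mul_eq _ (prod_linFactor_ne_zero _ _) (gSpecN_iff.mp hG) ?_ ?_
  · rw [rename_sumCongr_prod_linFactor]
    exact mul_prod_stair_swap_snd (linFactor qq⁻¹) hb' (by omega)
  · rw [rename_sumCongr_prod_linFactor]
    exact mul_prod_stair_swap_snd (linFactor (tq * qq⁻¹)) hb' hm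

end GSpecN

/-- Indices are 0-based: `TAx i` is `T_{i+1}^{(x)}` and `TAy (m - i - 2)` is `T_{m-i-1}^{(y)}`. -/
theorem msym_kernel_hecke_symmetry
    (m N : ℕ) (hm : m ≤ N)
    (TAx : ℕ → MvPowerSeries (Fin N ⊕ Fin N) KK → MvPowerSeries (Fin N ⊕ Fin N) KK)
    (hTAx : HeckeSpecPS tq (fun i : Fin N => (Sum.inl i : Fin N ⊕ Fin N)) TAx)
    (TAy : ℕ → MvPowerSeries (Fin N ⊕ Fin N) KK → MvPowerSeries (Fin N ⊕ Fin N) KK)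
    (hTAy : HeckeSpecPS tq (fun i : Fin N => (Sum.inr i : Fin N ⊕ Fin N)) TAy)
    (G : MvPowerSeries (Fin N ⊕ Fin N) KK) (hG : GSpecN m N G) :
    ∀ i : ℕ, i + 1 < m →
      TAx i (K0NN N * G) = TAy (m - i - 2) (K0NN N * G) := by
  intro i hi
  set j := m - i - 2
  have hij : i + j + 2 = m := by omega
  have hx := hTAx.X_sub_X_mul_apply (by omega : i + 1 < N) (K0NN N * G)
  rw [map_mul,
    ← Equiv.Perm.sumCongr_swap_refl, rename_sumCongr_K0NN, Equiv.Perm.sumCongr_swap_refl] at hx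
  have hy := hTAy.X_sub_X_mul_apply (by omega : j + 1 < N) (K0NN N * G)
  rw [map_mul,
    ← Equiv.Perm.sumCongr_refl_swap, rename_sumCongr_K0NN, Equiv.Perm.sumCongr_refl_swap] at hy
  have hGx := hG.mul_rename_swap_inl (a := ⟨i, by omega⟩) (a' := ⟨i + 1, by omega⟩)
    (b := ⟨j, by omega⟩) (b' := ⟨j + 1, by omega⟩) rfl rfl hij
  have hGy := hG.mul_rename_swap_inr (a := ⟨i, by omega⟩) (a' := ⟨i + 1, by omega⟩)
    (b := ⟨j, by omega⟩) (b' := ⟨j + 1, by omega⟩) rfl rfl hij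
  have hP := mul_ne_zero (linFactor_ne_zero (N := N) qq⁻¹ (⟨i + 1, by omega⟩, ⟨j + 1, by omega⟩))
    (linFactor_ne_zero (tq * qq⁻¹) (⟨i, by omega⟩, ⟨j, by omega⟩))
  unfold linFactor at hGx hGy hP
  dsimp only at hGx hGy hP
  refine hecke_eq_of_swap_relations (v := qq⁻¹) hx hy ?_ ?_ ?_ ?_ ?_
  · linear_combination K0NN N * hGx
  · linear_combination K0NN N * hGy
  · simp [MvPowerSeries.X_inj]
  · simp [MvPowerSeries.X_inj]
  · exact hP

end MSym
end
end
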